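/- Let (U,V) be a bivariate standard normal vector with correlation ρ ∈ (−1,1), and let Δ_j, Δ_k ∈ ℝ. Define the binary variables X = 1{U > Δ_j} and Y = 1{V > Δ_k}. Then Kendall's tau between X and Y equals F_bb(ρ; Δ_j, Δ_k) = 2{Φ₂(Δ_j, Δ_k; ρ) − Φ(Δ_j)·Φ(Δ_k)}. (Bridging function F_bb for a binary–binary pair in Theorem 1.) -/

import Mathlib

open MeasureTheory ProbabilityTheory Real Set
open scoped ENNReal NNReal Classical

noncomputable section

/-- Kendall's tau between two real random variables `X, Y` on `(Ω, P)`: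
`τ(X,Y) = P{(X−X′)(Y−Y′) > 0} − P{(X−X′)(Y−Y′) < 0}` where `(X′,Y′)` is an
independent copy of `(X,Y)`, realized on the product space. -/
noncomputable def kendallTau {Ω : Type*} [MeasurableSpace Ω] (P : Measure Ω)
    (X Y : Ω → ℝ) : ℝ :=
  ((P.prod P) {p : Ω × Ω | 0 < (X p.1 - X p.2) * (Y p.1 - Y p.2)}).toReal -
  ((P.prod P) {p : Ω × Ω | (X p.1 - X p.2) * (Y p.1 - Y p.2) < 0}).toReal

/-- The law of a mean-zero Gaussian vector with covariance matrix `S`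
(realized as the pushforward of i.i.d. standard normals by the psd square root of `S`). -/
noncomputable def mvGaussian {d : ℕ} (S : Matrix (Fin d) (Fin d) ℝ) :
    Measure (Fin d → ℝ) :=
  if h : S.PosSemidef then
    Measure.map (fun z => ((h.1.eigenvectorUnitary : Matrix (Fin d) (Fin d) ℝ) *
      Matrix.diagonal (fun i => √(h.1.eigenvalues i)) *
      (star h.1.eigenvectorUnitary : Matrix (Fin d) (Fin d) ℝ)).mulVec z) (Measure.pi fun _ : Fin d => gaussianReal 0 1)
  else 0

/-- `Φ_d(a₁,…,a_d; S) = P(W₁ ≤ a₁, …, W_d ≤ a_d)` for a mean-zero Gaussian vector `W`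
with covariance `S`; a coordinate `aᵢ = +∞` drops the constraint and `aᵢ = −∞` gives 0. -/
noncomputable def PhiD {d : ℕ} (a : Fin d → EReal) (S : Matrix (Fin d) (Fin d) ℝ) : ℝ :=
  (mvGaussian S {w | ∀ i, (w i : EReal) ≤ a i}).toReal

/-- Standard normal CDF `Φ`. -/
noncomputable def stdPhi (x : ℝ) : ℝ := ((gaussianReal 0 1) (Set.Iic x)).toReal

/-- Standard normal CDF extended to `EReal` arguments (`Φ(+∞)=1`, `Φ(−∞)=0`). -/
noncomputable def stdPhiE (a : EReal) : ℝ :=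
  ((gaussianReal 0 1) {x : ℝ | (x : EReal) ≤ a}).toReal

/-- `Φ₂(a,b;ρ)`: bivariate standard normal CDF with correlation `ρ`. -/
noncomputable def Phi2 (a b : EReal) (ρ : ℝ) : ℝ := PhiD ![a, b] !![1, ρ; ρ, 1]

/-- `(U,V)` is a bivariate standard normal vector with correlation `ρ` on `(Ω,P)`. -/
def IsBivStdNormal {Ω : Type*} [MeasurableSpace Ω] (P : Measure Ω)
    (U V : Ω → ℝ) (ρ : ℝ) : Prop :=
  Measure.map (fun ω => ![U ω, V ω]) P = mvGaussian !![1, ρ; ρ, 1]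

/-- density of 2d standard gaussian -/
def Gdens (z : Fin 2 → ℝ) : ℝ≥0∞ := gaussianPDF 0 1 (z 0) * gaussianPDF 0 1 (z 1)

lemma Gdens_meas : Measurable Gdens :=
  ((measurable_gaussianPDF 0 1).comp (measurable_pi_apply 0)).mul
    ((measurable_gaussianPDF 0 1).comp (measurable_pi_apply 1))

lemma pi_gauss_eq :
    (Measure.pi fun _ : Fin 2 => gaussianReal 0 1)
      = (volume : Measure (Fin 2 → ℝ)).withDensity Gdens := by
  refine (Measure.pi_eq (μ := fun _ : Fin 2 => gaussianReal 0 1) fun s hs => ?_)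
  rw [withDensity_apply _ (MeasurableSet.univ_pi hs)]
  have hmp := (measurePreserving_finTwoArrow (volume : Measure ℝ)).symm
  have hF : Measurable fun z : Fin 2 → ℝ => (Set.pi univ s).indicator Gdens z :=
    Gdens_meas.indicator (MeasurableSet.univ_pi hs)
  rw [← lintegral_indicator (MeasurableSet.univ_pi hs)]
  rw [show (volume : Measure (Fin 2 → ℝ)) = Measure.pi fun _ => volume from volume_pi]
  rw [← hmp.lintegral_comp hF]
  have : ∀ p : ℝ × ℝ,
      (Set.pi univ s).indicator Gdens (MeasurableEquiv.finTwoArrow.symm p)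
        = (Set.indicator (s 0) (gaussianPDF 0 1) p.1)
          * (Set.indicator (s 1) (gaussianPDF 0 1) p.2) := by
    intro p
    have hmem : (MeasurableEquiv.finTwoArrow.symm p) ∈ Set.pi univ s ↔ p.1 ∈ s 0 ∧ p.2 ∈ s 1 := by
      simp [MeasurableEquiv.finTwoArrow, Set.mem_univ_pi, Fin.forall_fin_two]
    have hG : Gdens (MeasurableEquiv.finTwoArrow.symm p)
        = gaussianPDF 0 1 p.1 * gaussianPDF 0 1 p.2 := by
      simp [Gdens, MeasurableEquiv.finTwoArrow]
    by_cases hm : (MeasurableEquiv.finTwoArrow.symm p) ∈ Set.pi univ s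
    · rw [Set.indicator_of_mem hm, hG, Set.indicator_of_mem (hmem.1 hm).1,
        Set.indicator_of_mem (hmem.1 hm).2]
    · rw [Set.indicator_of_notMem hm]
      rcases not_and_or.1 (fun h => hm (hmem.2 h)) with h | h
      · rw [Set.indicator_of_notMem h, zero_mul]
      · rw [Set.indicator_of_notMem h, mul_zero]
  simp_rw [this]
  rw [lintegral_prod_mul
    ((measurable_gaussianPDF 0 1).indicator (hs 0)).aemeasurable
    ((measurable_gaussianPDF 0 1).indicator (hs 1)).aemeasurable]
  rw [lintegral_indicator (hs 0), lintegral_indicator (hs 1)]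
  rw [Fin.prod_univ_two]
  rw [gaussianReal_of_var_ne_zero _ one_ne_zero, withDensity_apply _ (hs 0),
    withDensity_apply _ (hs 1)]

lemma mulVec_meas (M : Matrix (Fin 2) (Fin 2) ℝ) :
    Measurable (fun z : Fin 2 → ℝ => M.mulVec z) := by
  refine measurable_pi_lambda _ fun i => ?_
  simp only [Matrix.mulVec, dotProduct]
  exact Finset.measurable_sum _ fun j _ => (measurable_pi_apply j).const_mul _

lemma Gdens_rot (c d : ℝ) (h : c ^ 2 + d ^ 2 = 1) (z : Fin 2 → ℝ) :
    gaussianPDF 0 1 ((!![c, d; -d, c]).mulVec z 0)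
      * gaussianPDF 0 1 ((!![c, d; -d, c]).mulVec z 1)
      = gaussianPDF 0 1 (z 0) * gaussianPDF 0 1 (z 1) := by
  have h0 : (!![c, d; -d, c]).mulVec z 0 = c * z 0 + d * z 1 := by
    simp [Matrix.mulVec, dotProduct, Fin.sum_univ_two, Matrix.vecHead, Matrix.vecTail]
  have h1 : (!![c, d; -d, c]).mulVec z 1 = -d * z 0 + c * z 1 := by
    simp [Matrix.mulVec, dotProduct, Fin.sum_univ_two, Matrix.vecHead, Matrix.vecTail]
  rw [h0, h1]
  simp only [gaussianPDF, gaussianPDFReal, sub_zero, NNReal.coe_one, mul_one]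
  rw [← ENNReal.ofReal_mul (by positivity), ← ENNReal.ofReal_mul (by positivity)]
  congr 1
  have hsum : (c * z 0 + d * z 1) ^ 2 + (-d * z 0 + c * z 1) ^ 2 = z 0 ^ 2 + z 1 ^ 2 := by
    linear_combination (z 0 ^ 2 + z 1 ^ 2) * h
  have e1 : rexp (-(c * z 0 + d * z 1) ^ 2 / 2) * rexp (-(-d * z 0 + c * z 1) ^ 2 / 2)
      = rexp (-z 0 ^ 2 / 2) * rexp (-z 1 ^ 2 / 2) := by
    rw [← Real.exp_add, ← Real.exp_add]
    congr 1
    linarith [hsum]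
  linear_combination ((Real.sqrt (2 * π))⁻¹) ^ 2 * e1

lemma map_rot (c d : ℝ) (h : c ^ 2 + d ^ 2 = 1) :
    Measure.map (fun z : Fin 2 → ℝ => (!![c, d; -d, c]).mulVec z)
        (Measure.pi fun _ : Fin 2 => gaussianReal 0 1)
      = Measure.pi fun _ : Fin 2 => gaussianReal 0 1 := by
  have hT := mulVec_meas !![c, d; -d, c]
  have hvol : Measure.map (fun z : Fin 2 → ℝ => (!![c, d; -d, c]).mulVec z)
      (volume : Measure (Fin 2 → ℝ)) = volume := by
    have hdet : LinearMap.det (Matrix.toLin' !![c, d; -d, c]) = 1 := by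
      rw [LinearMap.det_toLin', Matrix.det_fin_two_of]
      linear_combination h
    have heq : (fun z : Fin 2 → ℝ => (!![c, d; -d, c]).mulVec z)
        = ⇑(Matrix.toLin' !![c, d; -d, c]) := by
      funext z; rw [Matrix.toLin'_apply]
    have hmv := Real.map_linearMap_volume_pi_eq_smul_volume_pi
      (f := Matrix.toLin' !![c, d; -d, c]) (by rw [hdet]; norm_num)
    rw [heq]
    simpa [hdet] using hmv
  rw [pi_gauss_eq]
  unfold Gdens
  ext s hs
  rw [Measure.map_apply hT hs, withDensity_apply _ (hT hs), withDensity_apply _ hs,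
    ← lintegral_indicator (hT hs), ← lintegral_indicator hs]
  have hGm : Measurable fun z : Fin 2 → ℝ => gaussianPDF 0 1 (z 0) * gaussianPDF 0 1 (z 1) :=
    ((measurable_gaussianPDF 0 1).comp (measurable_pi_apply 0)).mul
      ((measurable_gaussianPDF 0 1).comp (measurable_pi_apply 1))
  have key : ∀ z : Fin 2 → ℝ,
      ((fun w : Fin 2 → ℝ => (!![c, d; -d, c]).mulVec w) ⁻¹' s).indicator
          (fun z => gaussianPDF 0 1 (z 0) * gaussianPDF 0 1 (z 1)) z
        = (s.indicator (fun z => gaussianPDF 0 1 (z 0) * gaussianPDF 0 1 (z 1)))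
            ((!![c, d; -d, c]).mulVec z) := by
    intro z
    by_cases hz : (!![c, d; -d, c]).mulVec z ∈ s
    · rw [Set.indicator_of_mem
        (show z ∈ (fun w : Fin 2 → ℝ => (!![c, d; -d, c]).mulVec w) ⁻¹' s from hz),
        Set.indicator_of_mem hz]
      exact (Gdens_rot c d h z).symm
    · rw [Set.indicator_of_notMem
        (show z ∉ (fun w : Fin 2 → ℝ => (!![c, d; -d, c]).mulVec w) ⁻¹' s from hz),
        Set.indicator_of_notMem hz]
  simp_rw [key]
  rw [← lintegral_map (hGm.indicator hs) hT, hvol]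

lemma posSemidef_corr {ρ : ℝ} (hρ : ρ ∈ Set.Ioo (-1 : ℝ) 1) :
    (!![1, ρ; ρ, 1] : Matrix (Fin 2) (Fin 2) ℝ).PosSemidef := by
  refine Matrix.PosSemidef.of_dotProduct_mulVec_nonneg ?_ ?_
  · ext i j
    fin_cases i <;> fin_cases j <;>
      simp [Matrix.conjTranspose_apply]
  · intro x
    have hx : dotProduct (star x) (Matrix.mulVec (!![1, ρ; ρ, 1] : Matrix (Fin 2) (Fin 2) ℝ) x)
        = x 0 * x 0 + ρ * (2 * (x 0 * x 1)) + x 1 * x 1 := by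
      simp [dotProduct, Matrix.mulVec, Fin.sum_univ_two, Matrix.vecHead, Matrix.vecTail]
      ring
    rw [hx]
    obtain ⟨h1, h2⟩ := hρ
    nlinarith [sq_nonneg (x 0 + x 1), sq_nonneg (x 0 - x 1)]

/-- linear combination of two iid std normals with unit norm coefficients. -/
lemma map_combo (c d : ℝ) (h : c ^ 2 + d ^ 2 = 1) :
    Measure.map (fun z : Fin 2 → ℝ => c * z 0 + d * z 1)
        (Measure.pi fun _ : Fin 2 => gaussianReal 0 1)
      = gaussianReal 0 1 := by
  have hfun : (fun z : Fin 2 → ℝ => c * z 0 + d * z 1)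
      = (Prod.fst ∘ ⇑(MeasurableEquiv.finTwoArrow (α := ℝ)))
          ∘ (fun z : Fin 2 → ℝ => (!![c, d; -d, c]).mulVec z) := by
    funext z
    simp [MeasurableEquiv.finTwoArrow, Matrix.mulVec, dotProduct, Fin.sum_univ_two,
      Matrix.vecHead, Matrix.vecTail]
  rw [hfun, ← Measure.map_map (measurable_fst.comp MeasurableEquiv.finTwoArrow.measurable)
    (mulVec_meas _), map_rot c d h,
    ← Measure.map_map measurable_fst MeasurableEquiv.finTwoArrow.measurable,
    (measurePreserving_finTwoArrow (gaussianReal 0 1)).map_eq, Measure.map_fst_prod]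
  simp

lemma sqrtM_herm {d : ℕ} {S : Matrix (Fin d) (Fin d) ℝ} (hS : S.PosSemidef) :
    ((hS.1.eigenvectorUnitary : Matrix (Fin d) (Fin d) ℝ) *
      Matrix.diagonal (fun i => √(hS.1.eigenvalues i)) *
      (star hS.1.eigenvectorUnitary : Matrix (Fin d) (Fin d) ℝ)).conjTranspose =
    (hS.1.eigenvectorUnitary : Matrix (Fin d) (Fin d) ℝ) *
      Matrix.diagonal (fun i => √(hS.1.eigenvalues i)) *
      (star hS.1.eigenvectorUnitary : Matrix (Fin d) (Fin d) ℝ) := by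
  simp [Matrix.mul_assoc, Matrix.star_eq_conjTranspose]

lemma sqrtM_mul_self {d : ℕ} {S : Matrix (Fin d) (Fin d) ℝ} (hS : S.PosSemidef) :
    ((hS.1.eigenvectorUnitary : Matrix (Fin d) (Fin d) ℝ) *
      Matrix.diagonal (fun i => √(hS.1.eigenvalues i)) *
      (star hS.1.eigenvectorUnitary : Matrix (Fin d) (Fin d) ℝ)) *
    ((hS.1.eigenvectorUnitary : Matrix (Fin d) (Fin d) ℝ) *
      Matrix.diagonal (fun i => √(hS.1.eigenvalues i)) *
      (star hS.1.eigenvectorUnitary : Matrix (Fin d) (Fin d) ℝ)) = S := by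
  have hu : (star hS.1.eigenvectorUnitary : Matrix (Fin d) (Fin d) ℝ) *
      (hS.1.eigenvectorUnitary : Matrix (Fin d) (Fin d) ℝ) = 1 := by simp
  conv_rhs => rw [hS.1.spectral_theorem, Unitary.conjStarAlgAut_apply]
  calc _ = (hS.1.eigenvectorUnitary : Matrix (Fin d) (Fin d) ℝ) *
      (Matrix.diagonal (fun i => √(hS.1.eigenvalues i)) *
      ((star hS.1.eigenvectorUnitary : Matrix (Fin d) (Fin d) ℝ) *
      (hS.1.eigenvectorUnitary : Matrix (Fin d) (Fin d) ℝ)) *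
      Matrix.diagonal (fun i => √(hS.1.eigenvalues i))) *
      (star hS.1.eigenvectorUnitary : Matrix (Fin d) (Fin d) ℝ) := by
        simp only [Matrix.mul_assoc]
    _ = _ := by
      rw [hu, Matrix.mul_one, Matrix.diagonal_mul_diagonal]
      congr 3
      funext i
      simp [Real.mul_self_sqrt (hS.eigenvalues_nonneg i)]

lemma mvGaussian_marginal {S : Matrix (Fin 2) (Fin 2) ℝ} (hS : S.PosSemidef) (i : Fin 2)
    (hSi : S i i = 1) :
    Measure.map (fun w : Fin 2 → ℝ => w i) (mvGaussian S) = gaussianReal 0 1 := by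
  rw [mvGaussian, dif_pos hS, Measure.map_map (measurable_pi_apply i) (mulVec_meas _)]
  set M := ((hS.1.eigenvectorUnitary : Matrix (Fin 2) (Fin 2) ℝ) *
      Matrix.diagonal (fun i => √(hS.1.eigenvalues i)) *
      (star hS.1.eigenvectorUnitary : Matrix (Fin 2) (Fin 2) ℝ)) with hM
  have hherm : M.conjTranspose = M := sqrtM_herm hS
  have hsym : ∀ a b : Fin 2, M a b = M b a := by
    intro a b
    conv_lhs => rw [← hherm]
    simp [Matrix.conjTranspose_apply]
  have hcd : M i 0 ^ 2 + M i 1 ^ 2 = 1 := by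
    have hmul : (M * M) i i = S i i := by rw [sqrtM_mul_self hS]
    rw [Matrix.mul_apply, Fin.sum_univ_two] at hmul
    rw [← hSi, ← hmul, hsym 0 i, hsym 1 i]
    ring
  have hfun : ((fun w : Fin 2 → ℝ => w i) ∘ fun z => M.mulVec z)
      = fun z : Fin 2 → ℝ => M i 0 * z 0 + M i 1 * z 1 := by
    funext z
    simp only [Function.comp_apply, Matrix.mulVec, dotProduct, Fin.sum_univ_two]
  rw [hfun, map_combo _ _ hcd]

lemma mvGaussian_prob {d : ℕ} {S : Matrix (Fin d) (Fin d) ℝ} (hS : S.PosSemidef) :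
    IsProbabilityMeasure (mvGaussian S) := by
  rw [mvGaussian, dif_pos hS]
  have : Measurable (fun z : Fin d → ℝ => ((hS.1.eigenvectorUnitary : Matrix (Fin d) (Fin d) ℝ) *
      Matrix.diagonal (fun i => √(hS.1.eigenvalues i)) *
      (star hS.1.eigenvectorUnitary : Matrix (Fin d) (Fin d) ℝ)).mulVec z) := by
    refine measurable_pi_lambda _ fun i => ?_
    simp only [Matrix.mulVec, dotProduct]
    exact Finset.measurable_sum _ fun j _ => (measurable_pi_apply j).const_mul _
  exact Measure.isProbabilityMeasure_map this.aemeasurable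

/-- binary–binary bridging function
`F_bb(ρ; Δⱼ, Δₖ) = 2{Φ₂(Δⱼ,Δₖ;ρ) − Φ(Δⱼ)Φ(Δₖ)}`. -/
theorem kendallTau_bin_bin {Ω : Type*} [MeasurableSpace Ω] (P : Measure Ω)
    [IsProbabilityMeasure P] (U V : Ω → ℝ) (ρ : ℝ) (hρ : ρ ∈ Set.Ioo (-1 : ℝ) 1)
    (Δj Δk : ℝ) (hUV : IsBivStdNormal P U V ρ) :
    kendallTau P (fun ω => if Δj < U ω then (1 : ℝ) else 0)
        (fun ω => if Δk < V ω then (1 : ℝ) else 0)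
      = 2 * (Phi2 (Δj : EReal) (Δk : EReal) ρ - stdPhi Δj * stdPhi Δk) := by
  have hS : (!![1, ρ; ρ, 1] : Matrix (Fin 2) (Fin 2) ℝ).PosSemidef := posSemidef_corr hρ
  have hprob : IsProbabilityMeasure (mvGaussian !![1, ρ; ρ, 1]) := mvGaussian_prob hS
  rw [IsBivStdNormal] at hUV
  have hne : Measure.map (fun ω => ![U ω, V ω]) P ≠ 0 := by
    rw [hUV]; exact hprob.ne_zero
  have hW : AEMeasurable (fun ω => ![U ω, V ω]) P := by
    by_contra hc
    exact hne (Measure.map_of_not_aemeasurable hc)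
  have hU : AEMeasurable U P := by
    have := (measurable_pi_apply (0 : Fin 2)).comp_aemeasurable hW
    simpa [Function.comp_def] using this
  have hV : AEMeasurable V P := by
    have := (measurable_pi_apply (1 : Fin 2)).comp_aemeasurable hW
    simpa [Function.comp_def] using this
  set C := {ω | U ω ≤ Δj} with hCdef
  set D := {ω | V ω ≤ Δk} with hDdef
  have hCnm : NullMeasurableSet C P := hU.nullMeasurable measurableSet_Iic
  have hDnm : NullMeasurableSet D P := hV.nullMeasurable measurableSet_Iic
  -- CDF identifications
  have hjoint : P (C ∩ D) = mvGaussian !![1, ρ; ρ, 1] {w | w 0 ≤ Δj ∧ w 1 ≤ Δk} := by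
    have hms : MeasurableSet {w : Fin 2 → ℝ | w 0 ≤ Δj ∧ w 1 ≤ Δk} :=
      (measurableSet_le (measurable_pi_apply 0) measurable_const).inter
        (measurableSet_le (measurable_pi_apply 1) measurable_const)
    rw [← hUV, Measure.map_apply₀ hW hms.nullMeasurableSet]
    congr 1
  have hmargU : P C = mvGaussian !![1, ρ; ρ, 1] {w | w 0 ≤ Δj} := by
    have hms : MeasurableSet {w : Fin 2 → ℝ | w 0 ≤ Δj} :=
      measurableSet_le (measurable_pi_apply 0) measurable_const
    rw [← hUV, Measure.map_apply₀ hW hms.nullMeasurableSet]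
    congr 1
  have hmargV : P D = mvGaussian !![1, ρ; ρ, 1] {w | w 1 ≤ Δk} := by
    have hms : MeasurableSet {w : Fin 2 → ℝ | w 1 ≤ Δk} :=
      measurableSet_le (measurable_pi_apply 1) measurable_const
    rw [← hUV, Measure.map_apply₀ hW hms.nullMeasurableSet]
    congr 1
  have hPhiU : stdPhi Δj = (P C).toReal := by
    rw [hmargU, stdPhi, ← mvGaussian_marginal hS 0 (by norm_num),
      Measure.map_apply (measurable_pi_apply 0) measurableSet_Iic]
    rfl
  have hPhiV : stdPhi Δk = (P D).toReal := by
    rw [hmargV, stdPhi, ← mvGaussian_marginal hS 1 (by norm_num),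
      Measure.map_apply (measurable_pi_apply 1) measurableSet_Iic]
    rfl
  have hPhi2 : Phi2 (Δj : EReal) (Δk : EReal) ρ = (P (C ∩ D)).toReal := by
    rw [hjoint, Phi2, PhiD]
    congr 2
    ext w
    simp [Fin.forall_fin_two, Matrix.cons_val_zero, Matrix.cons_val_one, Matrix.head_cons,
      EReal.coe_le_coe_iff]
  -- Kendall set identities
  have hpos : {p : Ω × Ω | 0 < ((fun ω => if Δj < U ω then (1:ℝ) else 0) p.1
        - (fun ω => if Δj < U ω then (1:ℝ) else 0) p.2)
        * ((fun ω => if Δk < V ω then (1:ℝ) else 0) p.1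
        - (fun ω => if Δk < V ω then (1:ℝ) else 0) p.2)}
      = ((Cᶜ ∩ Dᶜ) ×ˢ (C ∩ D)) ∪ ((C ∩ D) ×ˢ (Cᶜ ∩ Dᶜ)) := by
    ext ⟨ω₁, ω₂⟩
    simp only [Set.mem_setOf_eq, Set.mem_union, Set.mem_prod, Set.mem_inter_iff,
      Set.mem_compl_iff, hCdef, hDdef, not_le]
    by_cases h1 : Δj < U ω₁ <;> by_cases h2 : Δj < U ω₂ <;>
      by_cases h3 : Δk < V ω₁ <;> by_cases h4 : Δk < V ω₂ <;>
      simp [h1, h2, h3, h4] <;>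
      exact ⟨not_lt.1 (by assumption), not_lt.1 (by assumption)⟩
  have hneg : {p : Ω × Ω | ((fun ω => if Δj < U ω then (1:ℝ) else 0) p.1
        - (fun ω => if Δj < U ω then (1:ℝ) else 0) p.2)
        * ((fun ω => if Δk < V ω then (1:ℝ) else 0) p.1
        - (fun ω => if Δk < V ω then (1:ℝ) else 0) p.2) < 0}
      = ((Cᶜ ∩ D) ×ˢ (C ∩ Dᶜ)) ∪ ((C ∩ Dᶜ) ×ˢ (Cᶜ ∩ D)) := by
    ext ⟨ω₁, ω₂⟩
    simp only [Set.mem_setOf_eq, Set.mem_union, Set.mem_prod, Set.mem_inter_iff,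
      Set.mem_compl_iff, hCdef, hDdef, not_le]
    by_cases h1 : Δj < U ω₁ <;> by_cases h2 : Δj < U ω₂ <;>
      by_cases h3 : Δk < V ω₁ <;> by_cases h4 : Δk < V ω₂ <;>
      simp [h1, h2, h3, h4] <;>
      exact ⟨not_lt.1 (by assumption), not_lt.1 (by assumption)⟩
  rw [kendallTau, hpos, hneg]
  -- measures of unions of rectangles
  have hdisj1 : Disjoint ((Cᶜ ∩ Dᶜ) ×ˢ (C ∩ D)) ((C ∩ D) ×ˢ (Cᶜ ∩ Dᶜ)) := by
    rw [Set.disjoint_left]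
    rintro ⟨ω₁, ω₂⟩ hp hq
    exact hp.1.1 hq.1.1
  have hdisj2 : Disjoint ((Cᶜ ∩ D) ×ˢ (C ∩ Dᶜ)) ((C ∩ Dᶜ) ×ˢ (Cᶜ ∩ D)) := by
    rw [Set.disjoint_left]
    rintro ⟨ω₁, ω₂⟩ hp hq
    exact hp.1.1 hq.1.1
  rw [measure_union₀ (((hCnm.inter hDnm)).prod (hCnm.compl.inter hDnm.compl))
      hdisj1.aedisjoint,
    measure_union₀ ((hCnm.inter hDnm.compl).prod (hCnm.compl.inter hDnm))
      hdisj2.aedisjoint,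
    Measure.prod_prod, Measure.prod_prod, Measure.prod_prod, Measure.prod_prod]
  -- real arithmetic
  have hfin : ∀ s : Set Ω, P s ≠ ⊤ := fun s => measure_ne_top P s
  set a := (P (C ∩ D)).toReal with ha
  set pj := (P C).toReal with hpj
  set pk := (P D).toReal with hpk
  have e01 : (P (C ∩ Dᶜ)).toReal = pj - a := by
    have := measure_inter_add_diff₀ (μ := P) C hDnm
    rw [Set.diff_eq] at this
    have := congrArg ENNReal.toReal this
    rw [ENNReal.toReal_add (hfin _) (hfin _)] at this
    linarith [this]
  have e10 : (P (Cᶜ ∩ D)).toReal = pk - a := by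
    have h2 := measure_inter_add_diff₀ (μ := P) D hCnm
    rw [Set.diff_eq, Set.inter_comm D C, Set.inter_comm D Cᶜ] at h2
    have h3 := congrArg ENNReal.toReal h2
    rw [ENNReal.toReal_add (hfin _) (hfin _)] at h3
    linarith [h3]
  have e11 : (P (Cᶜ ∩ Dᶜ)).toReal = 1 - pj - pk + a := by
    have hcu : Cᶜ ∩ Dᶜ = (C ∪ D)ᶜ := (Set.compl_union C D).symm
    have hu := measure_union_add_inter₀ (μ := P) C hDnm
    have hu' := congrArg ENNReal.toReal hu
    rw [ENNReal.toReal_add (hfin _) (hfin _), ENNReal.toReal_add (hfin _) (hfin _)] at hu'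
    have hcompl : P ((C ∪ D)ᶜ) = 1 - P (C ∪ D) :=
      prob_compl_eq_one_sub₀ (hCnm.union hDnm)
    have hle : P (C ∪ D) ≤ 1 := prob_le_one
    have : (P ((C ∪ D)ᶜ)).toReal = 1 - (P (C ∪ D)).toReal := by
      rw [hcompl, ENNReal.toReal_sub_of_le hle ENNReal.one_ne_top]
      simp
    rw [hcu, this]
    linarith [hu']
  rw [ENNReal.toReal_add (ENNReal.mul_ne_top (hfin _) (hfin _)) (ENNReal.mul_ne_top (hfin _) (hfin _)),
    ENNReal.toReal_add (ENNReal.mul_ne_top (hfin _) (hfin _)) (ENNReal.mul_ne_top (hfin _) (hfin _)),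
    ENNReal.toReal_mul, ENNReal.toReal_mul, ENNReal.toReal_mul, ENNReal.toReal_mul]
  rw [hPhi2, hPhiU, hPhiV, e01, e10, e11]
  ring


end
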